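/- There exist a sequence of natural numbers (aᵢ)_{i≥0}, a sequence of primes (qᵢ)_{i≥1}, and a family (P_{i,j})_{i,j≥0} of pairwise disjoint finite sets of primes such that: (1) for each i and j, the images of the primes in P_{i,j} generate the multiplicative group of units of ℤ/aᵢℤ; (2) every p ∈ P_{i,j} is a quadratic residue modulo q_k for every k > i; (3) a₀ = 3, each aᵢ divides a_{i+1}, q_{i+1} divides a_{i+1}, and every positive integer m divides aᵢ for some i; (4) qᵢ is coprime to aⱼ for all j < i; (5) q_k ∉ P_{i,j} for all k, i, j. -/

import Mathlib

/-!
The sets `P_{i,j}` are built one at a time, as `P n` for `n = Nat.pair i j`, interleaved with the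
primes `q`. By Dirichlet's theorem and the Chinese remainder theorem, `P n` contains a prime in
every unit class modulo `aᵢ` that is moreover `≡ 1` modulo `q_k` for `i < k ≤ n + 1`, hence a
square modulo these `q_k`. Every later `q_k` is chosen `≡ 1` modulo `8p` for all primes `p` used
so far, so `p` is a square modulo `q_k` by quadratic reciprocity (and the supplementary law when
`p = 2`). Choosing `q_{n+1} > aₙ` and `a_{n+1} = aₙ (n + 1) q_{n+1}` gives the divisibility and
coprimality conditions. Two primes cannot each be `≡ 1` modulo the other, which keeps the `P n`
apart from each other and from the `q_k`.
-/

theorem not_modEq_one_of_modEq_one {p q : ℕ} (hp : 2 ≤ p) (hq : 2 ≤ q) (h : p ≡ 1 [MOD q]) :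
    ¬q ≡ 1 [MOD p] := by
  intro h'
  have hqp : q ≤ p - 1 := Nat.le_of_dvd (by omega) ((Nat.modEq_iff_dvd' (by omega)).mp h.symm)
  have hpq : p ≤ q - 1 := Nat.le_of_dvd (by omega) ((Nat.modEq_iff_dvd' (by omega)).mp h'.symm)
  omega

theorem exists_prime_modEq_and_modEq_one {A Q r : ℕ} (hA : A ≠ 0) (hQ : Q ≠ 0)
    (hAQ : A.Coprime Q) (hr : r.Coprime A) : ∃ p, p.Prime ∧ p ≡ r [MOD A] ∧ p ≡ 1 [MOD Q] := by
  obtain ⟨c, hcr, hc1⟩ := Nat.chineseRemainder hAQ r 1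
  have hc : c.Coprime (A * Q) :=
    Nat.Coprime.mul_right (hcr.gcd_eq.trans hr) (hc1.gcd_eq.trans (Nat.gcd_one_left Q))
  obtain ⟨p, -, hp, hpc⟩ := Nat.forall_exists_prime_gt_and_modEq 0 (mul_ne_zero hA hQ) hc
  exact ⟨p, hp, (Nat.ModEq.of_mul_right Q hpc).trans hcr, (Nat.ModEq.of_mul_left A hpc).trans hc1⟩

theorem isSquare_natCast_of_modEq_one {p q : ℕ} (hp : p.Prime) (hq : q.Prime)
    (h : q ≡ 1 [MOD 8 * p]) : IsSquare (p : ZMod q) := by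
  have hq8 : q ≡ 1 [MOD 8] := h.of_mul_right p
  have hqp : q ≡ 1 [MOD p] := h.of_mul_left 8
  have : Fact p.Prime := ⟨hp⟩
  have : Fact q.Prime := ⟨hq⟩
  have hq2 : q ≠ 2 := by rintro rfl; exact absurd hq8 (by decide)
  rcases eq_or_ne p 2 with rfl | hp2
  · exact_mod_cast (ZMod.exists_sq_eq_two_iff (p := q) hq2).mpr (Or.inl hq8)
  · refine (ZMod.exists_sq_eq_prime_iff_of_mod_four_eq_one (p := q) (q := p) ?_ hp2).mpr ?_
    · exact Nat.ModEq.of_dvd (by norm_num : 4 ∣ 8) hq8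
    · rw [show (q : ZMod p) = 1 by exact_mod_cast (ZMod.natCast_eq_natCast_iff q 1 p).mpr hqp]
      exact IsSquare.one

noncomputable def primeModEqOneGt (M b : ℕ) : ℕ :=
  sInf {p | p.Prime ∧ p ≡ 1 [MOD M] ∧ b < p}

theorem primeModEqOneGt_spec {M : ℕ} (hM : M ≠ 0) (b : ℕ) :
    (primeModEqOneGt M b).Prime ∧ primeModEqOneGt M b ≡ 1 [MOD M] ∧ b < primeModEqOneGt M b := by
  obtain ⟨p, hp, hbp, hp1⟩ := Nat.exists_prime_gt_modEq_one b hM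
  exact Nat.sInf_mem (s := {p | p.Prime ∧ p ≡ 1 [MOD M] ∧ b < p}) ⟨p, hp, hp1, hbp⟩

noncomputable def primeRep (A Q r : ℕ) : ℕ :=
  sInf {p | p.Prime ∧ p ≡ r [MOD A] ∧ p ≡ 1 [MOD Q]}

noncomputable def primeReps (A Q : ℕ) : Finset ℕ :=
  ((Finset.range A).filter (·.Coprime A)).image (primeRep A Q)

section primeReps

variable {A Q : ℕ}

theorem primeRep_spec (hA : A ≠ 0) (hQ : Q ≠ 0) (hAQ : A.Coprime Q) {r : ℕ} (hr : r.Coprime A) :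
    (primeRep A Q r).Prime ∧ primeRep A Q r ≡ r [MOD A] ∧ primeRep A Q r ≡ 1 [MOD Q] :=
  Nat.sInf_mem (exists_prime_modEq_and_modEq_one hA hQ hAQ hr)

theorem prime_coprime_modEq_one_of_mem_primeReps (hA : A ≠ 0) (hQ : Q ≠ 0) (hAQ : A.Coprime Q)
    {p : ℕ} (hp : p ∈ primeReps A Q) :
    p.Prime ∧ p.Coprime A ∧ p ≡ 1 [MOD Q] := by
  obtain ⟨r, hr, rfl⟩ := Finset.mem_image.mp hp
  have hrA := (Finset.mem_filter.mp hr).2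
  obtain ⟨hprime, hpr, hp1⟩ := primeRep_spec hA hQ hAQ hrA
  exact ⟨hprime, hpr.gcd_eq.trans hrA, hp1⟩

theorem closure_primeReps (hA : A ≠ 0) (hQ : Q ≠ 0) (hAQ : A.Coprime Q) :
    Subgroup.closure {u : (ZMod A)ˣ | ∃ p ∈ primeReps A Q, (u : ZMod A) = p} = ⊤ := by
  have := NeZero.mk hA
  suffices h : ∀ u : (ZMod A)ˣ, ∃ p ∈ primeReps A Q, (u : ZMod A) = p by
    exact eq_top_iff.mpr fun u _ => Subgroup.subset_closure (h u)
  intro u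
  set r := (u : ZMod A).val
  have hr : r.Coprime A := ZMod.val_coe_unit_coprime u
  refine ⟨primeRep A Q r, Finset.mem_image_of_mem _ ?_, ?_⟩
  · exact Finset.mem_filter.mpr ⟨Finset.mem_range.mpr (ZMod.val_lt _), hr⟩
  · rw [(ZMod.natCast_eq_natCast_iff _ _ _).mpr (primeRep_spec hA hQ hAQ hr).2.1,
      ZMod.natCast_zmod_val]

end primeReps

namespace SpecialSequences

mutual
noncomputable def a : ℕ → ℕ
  | 0 => 3
  | n + 1 => a n * (n + 1) * q (n + 1)
termination_by n => 3 * n + 1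

noncomputable def q : ℕ → ℕ
  | 0 => 1
  | n + 1 => primeModEqOneGt (8 * ∏ m ∈ (Finset.range n).attach, ∏ p ∈ P m, p) (a n)
termination_by n => 3 * n
decreasing_by
  · have := Finset.mem_range.mp m.2; omega
  · omega

noncomputable def P (n : ℕ) : Finset ℕ :=
  primeReps (a n.unpair.1) (∏ k ∈ (Finset.Ioc n.unpair.1 (n + 1)).attach, q k)
termination_by 3 * n + 5
decreasing_by
  · have := n.unpair_left_le; omega
  · have := (Finset.mem_Ioc.mp k.2).2; omega
end

noncomputable def M (n : ℕ) : ℕ := 8 * ∏ m ∈ Finset.range n, ∏ p ∈ P m, p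

noncomputable def Q (n : ℕ) : ℕ := ∏ k ∈ Finset.Ioc n.unpair.1 (n + 1), q k

theorem a_succ (n : ℕ) : a (n + 1) = a n * (n + 1) * q (n + 1) := by
  rw [a]

theorem q_succ (n : ℕ) : q (n + 1) = primeModEqOneGt (M n) (a n) := by
  rw [q, M, Finset.prod_attach (Finset.range n) (fun m => ∏ p ∈ P m, p)]

theorem P_eq (n : ℕ) : P n = primeReps (a n.unpair.1) (Q n) := by
  rw [P, Q, Finset.prod_attach _ q]

theorem a_dvd_a_succ (n : ℕ) : a n ∣ a (n + 1) :=
  a_succ n ▸ (dvd_mul_right _ _).mul_right _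

theorem a_dvd_a {m n : ℕ} (h : m ≤ n) : a m ∣ a n :=
  Nat.le_induction dvd_rfl (fun n _ ih => ih.trans (a_dvd_a_succ n)) n h

theorem q_dvd_a (n : ℕ) : q (n + 1) ∣ a (n + 1) :=
  a_succ n ▸ dvd_mul_left _ _

theorem succ_dvd_a (n : ℕ) : n + 1 ∣ a (n + 1) :=
  a_succ n ▸ (dvd_mul_left _ _).mul_right _

theorem eight_mul_dvd_M {m n p : ℕ} (hmn : m < n) (hp : p ∈ P m) : 8 * p ∣ M n :=
  mul_dvd_mul_left 8 ((Finset.dvd_prod_of_mem _ hp).trans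
    (Finset.dvd_prod_of_mem (fun m => ∏ p ∈ P m, p) (Finset.mem_range.mpr hmn)))

theorem q_dvd_Q {n k : ℕ} (hik : n.unpair.1 < k) (hkn : k ≤ n + 1) : q k ∣ Q n :=
  Finset.dvd_prod_of_mem q (Finset.mem_Ioc.mpr ⟨hik, hkn⟩)

/-- The `sInf` choices meet their specifications only when `M n ≠ 0`, `Q n ≠ 0` and `a i` is
coprime to `Q n`, which holds as long as the earlier `P m` consist of primes. -/
def AllPrimeBelow (n : ℕ) : Prop := ∀ m < n, ∀ p ∈ P m, p.Prime

theorem AllPrimeBelow.mono {m n : ℕ} (h : AllPrimeBelow n) (hmn : m ≤ n) : AllPrimeBelow m :=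
  fun l hl => h l (by omega)

theorem q_succ_spec {n : ℕ} (h : AllPrimeBelow n) :
    (q (n + 1)).Prime ∧ q (n + 1) ≡ 1 [MOD M n] ∧ a n < q (n + 1) := by
  have hM : M n ≠ 0 := mul_ne_zero (by norm_num) <| Finset.prod_ne_zero_iff.mpr fun m hm =>
    Finset.prod_ne_zero_iff.mpr fun p hp => (h m (Finset.mem_range.mp hm) p hp).ne_zero
  rw [q_succ]
  exact primeModEqOneGt_spec hM (a n)

theorem a_ne_zero {n : ℕ} (h : AllPrimeBelow n) : a n ≠ 0 := by
  induction n with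
  | zero => simp [a]
  | succ n ih =>
    rw [a_succ]
    exact mul_ne_zero (mul_ne_zero (ih (h.mono n.le_succ)) n.succ_ne_zero)
      (q_succ_spec (h.mono n.le_succ)).1.ne_zero

theorem coprime_q_a_of_allPrimeBelow {n i k : ℕ} (h : AllPrimeBelow n) (hik : i < k)
    (hkn : k ≤ n + 1) : (q k).Coprime (a i) := by
  obtain ⟨k, rfl⟩ := Nat.exists_eq_add_one.mpr (by omega : 0 < k)
  obtain ⟨hq, -, hlt⟩ := q_succ_spec (n := k) (h.mono (by omega))
  refine (Nat.Prime.coprime_iff_not_dvd hq).mpr fun hdvd => ?_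
  have := Nat.le_of_dvd (Nat.pos_of_ne_zero (a_ne_zero (h.mono (m := k) (by omega))))
    (hdvd.trans (a_dvd_a (by omega : i ≤ k)))
  omega

theorem Q_ne_zero {n : ℕ} (h : AllPrimeBelow n) : Q n ≠ 0 :=
  Finset.prod_ne_zero_iff.mpr fun j hj => by
    obtain ⟨hij, hjn⟩ := Finset.mem_Ioc.mp hj
    obtain ⟨k, rfl⟩ := Nat.exists_eq_add_one.mpr (by omega : 0 < j)
    exact (q_succ_spec (n := k) (h.mono (by omega))).1.ne_zero

theorem coprime_a_Q {n : ℕ} (h : AllPrimeBelow n) : (a n.unpair.1).Coprime (Q n) :=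
  Nat.Coprime.prod_right fun _ hk =>
    (coprime_q_a_of_allPrimeBelow h (Finset.mem_Ioc.mp hk).1 (Finset.mem_Ioc.mp hk).2).symm

theorem prime_coprime_modEq_one_of_mem_P {n p : ℕ} (h : AllPrimeBelow n) (hp : p ∈ P n) :
    p.Prime ∧ p.Coprime (a n.unpair.1) ∧ p ≡ 1 [MOD Q n] := by
  rw [P_eq] at hp
  exact prime_coprime_modEq_one_of_mem_primeReps (a_ne_zero (h.mono n.unpair_left_le))
    (Q_ne_zero h) (coprime_a_Q h) hp

theorem allPrimeBelow (n : ℕ) : AllPrimeBelow n := by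
  induction n with
  | zero => exact fun m hm => absurd hm m.not_lt_zero
  | succ n ih =>
    intro m hm p hp
    rcases Nat.lt_succ_iff_lt_or_eq.mp hm with hm | rfl
    · exact ih m hm p hp
    · exact (prime_coprime_modEq_one_of_mem_P ih hp).1

theorem prime_q {k : ℕ} (hk : 1 ≤ k) : (q k).Prime := by
  obtain ⟨k, rfl⟩ := Nat.exists_eq_add_one.mpr hk
  exact (q_succ_spec (allPrimeBelow k)).1

theorem coprime_q_a {i k : ℕ} (hik : i < k) : (q k).Coprime (a i) :=
  coprime_q_a_of_allPrimeBelow (allPrimeBelow k) hik k.le_succ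

theorem prime_of_mem_P {n p : ℕ} (hp : p ∈ P n) : p.Prime :=
  (prime_coprime_modEq_one_of_mem_P (allPrimeBelow n) hp).1

theorem coprime_a_of_mem_P {n p : ℕ} (hp : p ∈ P n) : p.Coprime (a n.unpair.1) :=
  (prime_coprime_modEq_one_of_mem_P (allPrimeBelow n) hp).2.1

theorem modEq_one_of_mem_P {n k p : ℕ} (hp : p ∈ P n) (hik : n.unpair.1 < k) (hkn : k ≤ n + 1) :
    p ≡ 1 [MOD q k] :=
  (prime_coprime_modEq_one_of_mem_P (allPrimeBelow n) hp).2.2.of_dvd (q_dvd_Q hik hkn)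

theorem closure_P {n i : ℕ} (hi : n.unpair.1 = i) :
    Subgroup.closure {u : (ZMod (a i))ˣ | ∃ p ∈ P n, (u : ZMod (a i)) = p} = ⊤ := by
  subst hi
  have h := allPrimeBelow n
  rw [P_eq]
  exact closure_primeReps (a_ne_zero (h.mono n.unpair_left_le)) (Q_ne_zero h) (coprime_a_Q h)

theorem q_modEq_one_of_mem_P {m k p : ℕ} (hp : p ∈ P m) (hmk : m + 1 < k) :
    q k ≡ 1 [MOD 8 * p] := by
  obtain ⟨k, rfl⟩ := Nat.exists_eq_add_one.mpr (by omega : 0 < k)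
  exact (q_succ_spec (allPrimeBelow k)).2.1.of_dvd (eight_mul_dvd_M (by omega) hp)

theorem disjoint_P {m n : ℕ} (hmn : m ≠ n) : Disjoint (P m) (P n) := by
  wlog hlt : m < n generalizing m n
  · exact (this hmn.symm (by omega)).symm
  refine Finset.disjoint_left.mpr fun p hpm hpn => ?_
  have hq := prime_q (k := n + 1) (by omega)
  refine not_modEq_one_of_modEq_one (prime_of_mem_P hpn).two_le hq.two_le
    (modEq_one_of_mem_P hpn (by have := n.unpair_left_le; omega) le_rfl) ?_
  exact (q_modEq_one_of_mem_P hpm (by omega)).of_mul_left 8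

theorem isSquare_of_mem_P {n k p : ℕ} (hp : p ∈ P n) (hik : n.unpair.1 < k) :
    IsSquare (p : ZMod (q k)) := by
  rcases le_or_gt k (n + 1) with hkn | hnk
  · rw [show (p : ZMod (q k)) = 1 by
      exact_mod_cast (ZMod.natCast_eq_natCast_iff p 1 _).mpr (modEq_one_of_mem_P hp hik hkn)]
    exact IsSquare.one
  · exact isSquare_natCast_of_modEq_one (prime_of_mem_P hp) (prime_q (by omega))
      (q_modEq_one_of_mem_P hp hnk)

theorem q_not_mem_P {k : ℕ} (hk : 1 ≤ k) (n : ℕ) : q k ∉ P n := by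
  intro hq
  have h2 := (prime_q hk).two_le
  rcases le_or_gt k n.unpair.1 with hki | hik
  · obtain ⟨k, rfl⟩ := Nat.exists_eq_add_one.mpr hk
    have := Nat.Coprime.eq_one_of_dvd (coprime_a_of_mem_P hq) ((q_dvd_a k).trans (a_dvd_a hki))
    omega
  rcases le_or_gt k (n + 1) with hkn | hnk
  · have h := modEq_one_of_mem_P hq hik hkn
    exact not_modEq_one_of_modEq_one h2 h2 h h
  · have h := (q_modEq_one_of_mem_P hq hnk).of_mul_left 8
    exact not_modEq_one_of_modEq_one h2 h2 h h

end SpecialSequences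

/-- There are sequences `(aᵢ)`, primes `(qᵢ)_{i ≥ 1}`, and pairwise disjoint finite
sets of primes `(P_{i,j})` satisfying conditions (1)-(5) of the lemma. -/
theorem exists_special_sequences :
    ∃ (a : ℕ → ℕ) (q : ℕ → ℕ) (P : ℕ → ℕ → Finset ℕ),
      (∀ i, 1 ≤ i → (q i).Prime) ∧
      (∀ i j, ∀ p ∈ P i j, p.Prime) ∧
      (∀ i j i' j', (i, j) ≠ (i', j') → Disjoint (P i j) (P i' j')) ∧
      -- (1) the images of the primes in `P i j` generate `(ℤ/aᵢℤ)ˣ`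
      (∀ i j, Subgroup.closure
        {u : (ZMod (a i))ˣ | ∃ p ∈ P i j, (u : ZMod (a i)) = (p : ZMod (a i))} = ⊤) ∧
      -- (2) every `p ∈ P i j` is a quadratic residue modulo `q k` for `k > i`
      (∀ i j k, i < k → ∀ p ∈ P i j, IsSquare ((p : ZMod (q k)))) ∧
      -- (3) `a 0 = 3`, `aᵢ ∣ a_{i+1}`, `q_{i+1} ∣ a_{i+1}`, and every positive `m`
      -- divides some `aᵢ`
      a 0 = 3 ∧ (∀ i, a i ∣ a (i + 1)) ∧ (∀ i, q (i + 1) ∣ a (i + 1)) ∧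
      (∀ m : ℕ, 0 < m → ∃ i, m ∣ a i) ∧
      -- (4) `qᵢ` is coprime to `aⱼ` for `j < i`
      (∀ i j, j < i → Nat.Coprime (q i) (a j)) ∧
      -- (5) `q k ∉ P i j`
      (∀ k, 1 ≤ k → ∀ i j, q k ∉ P i j) := by
  open SpecialSequences in
  refine ⟨a, q, fun i j => P (Nat.pair i j), fun i => prime_q, fun i j p => prime_of_mem_P,
    fun i j i' j' hne => disjoint_P (Nat.pair_eq_pair.not.mpr (by simpa using hne)),
    fun i j => closure_P (by simp),
    fun i j k hik p hp => isSquare_of_mem_P hp (by simpa using hik),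
    by rw [a], a_dvd_a_succ, q_dvd_a, fun m hm => ⟨m, ?_⟩,
    fun i j hji => coprime_q_a hji, fun k hk i j => q_not_mem_P hk (Nat.pair i j)⟩
  obtain ⟨m, rfl⟩ := Nat.exists_eq_add_one.mpr hm
  exact succ_dvd_a m
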